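/- For each a in (0,1), there exists a unique continuous function L_a : [0,1] → ℝ satisfying L_a(x) = a·L_a(2x) for 0 ≤ x ≤ 1/2 and L_a(x) = a + (1-a)·L_a(2x-1) for 1/2 ≤ x ≤ 1; moreover L_a(0) = 0, L_a(1) = 1, and L_a is monotone increasing. -/

import Mathlib

/-!
The two right-hand sides define an operator `T` on continuous functions `g` on `[0,1]` with
`g 0 = 0` and `g 1 = 1`; these boundary values are exactly what makes the two branches agree at
`x = 1/2`. In the sup metric `T` contracts distances by the factor `max a (1 - a) < 1`, so by
Banach's theorem it has a fixed point, and as `T` preserves monotonicity, the fixed point (the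
limit of the iterates of the identity) is monotone. For uniqueness, at a point where `|L - L'|` is
maximal the same estimate gives `max |L - L'| ≤ max a (1 - a) * max |L - L'|`.
-/

open Set unitInterval Filter

noncomputable section

namespace DeRham

def deRhamMap (a : ℝ) (g : ℝ → ℝ) (x : ℝ) : ℝ :=
  if x ≤ 1/2 then a * g (2*x) else a + (1-a) * g (2*x - 1)

variable {a x : ℝ} {g h : ℝ → ℝ}

lemma deRhamMap_eq_left (hx : x ≤ 1/2) : deRhamMap a g x = a * g (2*x) := if_pos hx

lemma deRhamMap_eq_right (hg₀ : g 0 = 0) (hg₁ : g 1 = 1) (hx : 1/2 ≤ x) :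
    deRhamMap a g x = a + (1-a) * g (2*x - 1) := by
  rcases hx.eq_or_lt with rfl | hx
  · norm_num [deRhamMap, hg₀, hg₁]
  · exact if_neg (not_le.2 hx)

lemma deRhamMap_zero (hg : g 0 = 0) : deRhamMap a g 0 = 0 := by
  simp [deRhamMap, hg]

lemma deRhamMap_one (hg : g 1 = 1) : deRhamMap a g 1 = 1 := by
  norm_num [deRhamMap, hg]

lemma continuous_deRhamMap (hg : Continuous g) (hg₀ : g 0 = 0) (hg₁ : g 1 = 1) :
    Continuous (deRhamMap a g) := by
  refine Continuous.if_le (by fun_prop) (by fun_prop) continuous_id continuous_const ?_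
  rintro x rfl
  norm_num [hg₀, hg₁]

lemma monotoneOn_deRhamMap (ha : a ∈ Icc (0:ℝ) 1) (hg : MonotoneOn g (Icc 0 1))
    (hg₀ : g 0 = 0) (hg₁ : g 1 = 1) : MonotoneOn (deRhamMap a g) (Icc 0 1) := by
  have hbounds : ∀ y ∈ Icc (0:ℝ) 1, 0 ≤ g y ∧ g y ≤ 1 := fun y hy =>
    ⟨hg₀ ▸ hg ⟨le_rfl, zero_le_one⟩ hy hy.1, hg₁ ▸ hg hy ⟨zero_le_one, le_rfl⟩ hy.2⟩
  intro x hx y hy hxy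
  simp only [deRhamMap]
  split_ifs with hx' hy' hy'
  · exact mul_le_mul_of_nonneg_left (hg ⟨by linarith [hx.1], by linarith⟩
      ⟨by linarith [hy.1], by linarith⟩ (by linarith)) ha.1
  · have hgx := (hbounds (2*x) ⟨by linarith [hx.1], by linarith⟩).2
    have hgy := (hbounds (2*y - 1) ⟨by linarith, by linarith [hy.2]⟩).1
    nlinarith [mul_le_mul_of_nonneg_left hgx ha.1, mul_nonneg (sub_nonneg.2 ha.2) hgy]
  · linarith
  · gcongr
    · linarith [ha.2]
    · exact hg ⟨by linarith, by linarith [hx.2]⟩ ⟨by linarith, by linarith [hy.2]⟩ (by linarith)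

lemma abs_deRhamMap_sub_le (ha : a ∈ Icc (0:ℝ) 1) {C : ℝ}
    (hC : ∀ y ∈ Icc (0:ℝ) 1, |g y - h y| ≤ C) (hx : x ∈ Icc (0:ℝ) 1) :
    |deRhamMap a g x - deRhamMap a h x| ≤ max a (1-a) * C := by
  simp only [deRhamMap]
  split_ifs with hx'
  · rw [← mul_sub, abs_mul, abs_of_nonneg ha.1]
    exact mul_le_mul (le_max_left _ _) (hC _ ⟨by linarith [hx.1], by linarith⟩)
      (abs_nonneg _) (ha.1.trans (le_max_left _ _))
  · rw [add_sub_add_left_eq_sub, ← mul_sub, abs_mul, abs_of_nonneg (sub_nonneg.2 ha.2)]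
    exact mul_le_mul (le_max_right _ _) (hC _ ⟨by linarith, by linarith [hx.2]⟩)
      (abs_nonneg _) (ha.1.trans (le_max_left _ _))

lemma eqOn_deRhamMap_of_forall (hleft : ∀ x : ℝ, 0 ≤ x → x ≤ 1/2 → g x = a * g (2*x))
    (hright : ∀ x : ℝ, 1/2 ≤ x → x ≤ 1 → g x = a + (1-a) * g (2*x - 1)) :
    EqOn g (deRhamMap a g) (Icc 0 1) := by
  intro x hx
  simp only [deRhamMap]
  split_ifs with hx'
  · exact hleft x hx.1 hx'
  · exact hright x (le_of_not_ge hx') hx.2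

lemma eqOn_of_eqOn_deRhamMap (ha : a ∈ Ioo (0:ℝ) 1) (hg : ContinuousOn g (Icc 0 1))
    (hh : ContinuousOn h (Icc 0 1)) (hgT : EqOn g (deRhamMap a g) (Icc 0 1))
    (hhT : EqOn h (deRhamMap a h) (Icc 0 1)) : EqOn g h (Icc 0 1) := by
  obtain ⟨x₀, hx₀, hmax⟩ := isCompact_Icc.exists_isMaxOn (nonempty_Icc.2 zero_le_one)
    (hg.sub hh).abs
  set M := |g x₀ - h x₀|
  have hbound : ∀ x ∈ Icc (0:ℝ) 1, |g x - h x| ≤ max a (1-a) * M := fun x hx => by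
    rw [hgT hx, hhT hx]
    exact abs_deRhamMap_sub_le (Ioo_subset_Icc_self ha) (fun y hy => hmax hy) hx
  have hk : max a (1-a) < 1 := max_lt ha.2 (by linarith [ha.1])
  have hM : M ≤ 0 := by nlinarith [hbound x₀ hx₀, abs_nonneg (g x₀ - h x₀)]
  exact fun x hx => sub_eq_zero.1 (abs_nonpos_iff.1 ((hmax hx).trans hM))

abbrev NormalizedMap : Type := {f : C(I, ℝ) // f 0 = 0 ∧ f 1 = 1}

lemma isClosed_setOf_normalized : IsClosed {f : C(I, ℝ) | f 0 = 0 ∧ f 1 = 1} :=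
  (isClosed_eq (continuous_eval_const 0) continuous_const).inter
    (isClosed_eq (continuous_eval_const 1) continuous_const)

instance : CompleteSpace NormalizedMap := isClosed_setOf_normalized.completeSpace_coe

namespace NormalizedMap

def identity : NormalizedMap := ⟨ContinuousMap.mk Subtype.val, rfl, rfl⟩

instance : Nonempty NormalizedMap := ⟨identity⟩

abbrev extend (f : NormalizedMap) : ℝ → ℝ := IccExtend zero_le_one f.1

lemma extend_zero (f : NormalizedMap) : f.extend 0 = 0 := (IccExtend_left _ _).trans f.2.1

lemma extend_one (f : NormalizedMap) : f.extend 1 = 1 := (IccExtend_right _ _).trans f.2.2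

lemma extend_of_mem (f : NormalizedMap) {y : ℝ} (hy : y ∈ Icc (0:ℝ) 1) :
    f.extend y = f.1 ⟨y, hy⟩ :=
  IccExtend_of_mem _ _ hy

lemma continuous_extend (f : NormalizedMap) : Continuous f.extend :=
  f.1.continuous.Icc_extend'

end NormalizedMap

def deRhamOp (a : ℝ) (f : NormalizedMap) : NormalizedMap :=
  ⟨⟨fun t => deRhamMap a f.extend t,
      (continuous_deRhamMap f.continuous_extend f.extend_zero f.extend_one).comp
        continuous_subtype_val⟩,
    deRhamMap_zero f.extend_zero, deRhamMap_one f.extend_one⟩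

lemma deRhamOp_apply (f : NormalizedMap) (t : I) :
    (deRhamOp a f).1 t = deRhamMap a f.extend t :=
  rfl

lemma dist_deRhamOp_le (ha : a ∈ Icc (0:ℝ) 1) (f g : NormalizedMap) :
    dist (deRhamOp a f) (deRhamOp a g) ≤ max a (1-a) * dist f g := by
  rw [Subtype.dist_eq, ContinuousMap.dist_le (mul_nonneg (ha.1.trans (le_max_left _ _))
    dist_nonneg)]
  intro t
  rw [Real.dist_eq, deRhamOp_apply, deRhamOp_apply]
  refine abs_deRhamMap_sub_le ha (fun y hy => ?_) t.2
  rw [f.extend_of_mem hy, g.extend_of_mem hy, ← Real.dist_eq]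
  exact ContinuousMap.dist_apply_le_dist _

lemma contractingWith_deRhamOp (ha : a ∈ Ioo (0:ℝ) 1) :
    ContractingWith ⟨max a (1-a), ha.1.le.trans (le_max_left _ _)⟩ (deRhamOp a) :=
  ⟨max_lt ha.2 (by linarith [ha.1]),
    LipschitzWith.of_dist_le_mul (dist_deRhamOp_le (Ioo_subset_Icc_self ha))⟩

lemma isClosed_setOf_monotone : IsClosed {f : NormalizedMap | Monotone f.1} :=
  isClosed_monotone.preimage (continuous_coeFun.comp continuous_subtype_val)

lemma mapsTo_deRhamOp_setOf_monotone (ha : a ∈ Icc (0:ℝ) 1) :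
    MapsTo (deRhamOp a) {f | Monotone f.1} {f | Monotone f.1} := fun f hf s t hst =>
  monotoneOn_deRhamMap ha ((hf.IccExtend _).monotoneOn _) f.extend_zero f.extend_one s.2 t.2 hst

lemma eqOn_extend_deRhamMap_of_isFixedPt {f : NormalizedMap}
    (hf : Function.IsFixedPt (deRhamOp a) f) :
    EqOn f.extend (deRhamMap a f.extend) (Icc 0 1) := fun x hx =>
  (f.extend_of_mem hx).trans (congrArg (fun g : NormalizedMap => g.1 ⟨x, hx⟩) hf).symm

lemma monotone_fixedPoint_deRhamOp (ha : a ∈ Ioo (0:ℝ) 1) :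
    Monotone ((contractingWith_deRhamOp ha).fixedPoint (deRhamOp a)).1 :=
  isClosed_setOf_monotone.mem_of_tendsto
    ((contractingWith_deRhamOp ha).tendsto_iterate_fixedPoint NormalizedMap.identity)
    (Eventually.of_forall fun n =>
      (mapsTo_deRhamOp_setOf_monotone (Ioo_subset_Icc_self ha)).iterate n fun _ _ h => h)

end DeRham

end

open DeRham

theorem deRham_linear_existence_uniqueness (a : ℝ) (ha : a ∈ Set.Ioo (0:ℝ) 1) :
    ∃ L : ℝ → ℝ,
      (ContinuousOn L (Set.Icc 0 1) ∧
        (∀ x : ℝ, 0 ≤ x → x ≤ 1/2 → L x = a * L (2*x)) ∧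
        (∀ x : ℝ, 1/2 ≤ x → x ≤ 1 → L x = a + (1-a) * L (2*x - 1))) ∧
      L 0 = 0 ∧ L 1 = 1 ∧ MonotoneOn L (Set.Icc 0 1) ∧
      (∀ L' : ℝ → ℝ,
        (ContinuousOn L' (Set.Icc 0 1) ∧
          (∀ x : ℝ, 0 ≤ x → x ≤ 1/2 → L' x = a * L' (2*x)) ∧
          (∀ x : ℝ, 1/2 ≤ x → x ≤ 1 → L' x = a + (1-a) * L' (2*x - 1))) →
        Set.EqOn L L' (Set.Icc 0 1)) := by
  have hT := contractingWith_deRhamOp ha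
  set L₀ := hT.fixedPoint (deRhamOp a)
  have hfix := eqOn_extend_deRhamMap_of_isFixedPt hT.fixedPoint_isFixedPt
  have hcont := L₀.continuous_extend.continuousOn (s := Icc 0 1)
  refine ⟨L₀.extend, ⟨hcont, fun x hx₀ hx => ?_, fun x hx hx₁ => ?_⟩, L₀.extend_zero,
    L₀.extend_one, ((monotone_fixedPoint_deRhamOp ha).IccExtend _).monotoneOn _, ?_⟩
  · exact (hfix ⟨hx₀, by linarith⟩).trans (deRhamMap_eq_left hx)
  · exact (hfix ⟨by linarith, hx₁⟩).trans (deRhamMap_eq_right L₀.extend_zero L₀.extend_one hx)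
  · rintro L' ⟨hcont', hleft, hright⟩
    exact eqOn_of_eqOn_deRhamMap ha hcont hcont' hfix (eqOn_deRhamMap_of_forall hleft hright)
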